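/- In any weak concurrent Kleene algebra, for all elements s and t, (s + t)* = (s*·t*)*. -/
import Mathlib


/-- Operations of a weak concurrent Kleene algebra. -/
class WCKAOps (K : Type*) where
  add : K → K → K
  seq : K → K → K
  par : K → K → K
  star : K → K
  zero : K
  one : K

namespace WCKAOps

variable {K : Type*} [WCKAOps K]

/-- The natural order: `x ≤ y` iff `x + y = y`. -/
def kle (x y : K) : Prop := add x y = y

end WCKAOps

open WCKAOps

/-- Axioms of a weak concurrent Kleene algebra. -/
class WCKA (K : Type*) [WCKAOps K] : Prop where
  add_assoc : ∀ x y z : K, add (add x y) z = add x (add y z)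
  add_comm : ∀ x y : K, add x y = add y x
  add_idem : ∀ x : K, add x x = x
  add_zero : ∀ x : K, add x zero = x
  seq_assoc : ∀ x y z : K, seq (seq x y) z = seq x (seq y z)
  one_seq : ∀ x : K, seq one x = x
  seq_one : ∀ x : K, seq x one = x
  zero_seq : ∀ x : K, seq zero x = zero
  add_seq : ∀ x y z : K, seq (add x y) z = add (seq x z) (seq y z)
  seq_subdistrib : ∀ x y z : K, kle (add (seq x y) (seq x z)) (seq x (add y z))
  star_unfold : ∀ x : K, add one (seq x (star x)) = star x
  star_induction : ∀ x y : K, kle (seq x y) y → kle (seq (star x) y) y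
  par_assoc : ∀ x y z : K, par (par x y) z = par x (par y z)
  par_comm : ∀ x y : K, par x y = par y x
  par_one_one : par (one : K) one = one
  par_subdistrib : ∀ x y z : K, kle (add (par x y) (par x z)) (par x (add y z))
  interchange : ∀ x y u v : K, kle (seq (par x y) (par u v)) (par (seq x u) (seq y v))

section Aux

variable {K : Type*} [WCKAOps K] [WCKA K]

open WCKA

lemma kle_refl (x : K) : kle x x := add_idem x

lemma kle_trans {x y z : K} (h1 : kle x y) (h2 : kle y z) : kle x z := by
  unfold kle at *
  rw [← h2, ← WCKA.add_assoc, h1]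

lemma kle_antisymm {x y : K} (h1 : kle x y) (h2 : kle y x) : x = y := by
  unfold kle at *
  rw [← h1, WCKA.add_comm, h2]

lemma kle_add_left (x y : K) : kle x (add x y) := by
  unfold kle; rw [← WCKA.add_assoc, WCKA.add_idem]

lemma kle_add_right (x y : K) : kle y (add x y) := by
  rw [WCKA.add_comm]; exact kle_add_left y x

lemma add_kle {x y z : K} (h1 : kle x z) (h2 : kle y z) : kle (add x y) z := by
  unfold kle at *
  rw [WCKA.add_assoc, h2, h1]

lemma seq_kle_left {x y : K} (z : K) (h : kle x y) : kle (seq x z) (seq y z) := by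
  unfold kle at *
  rw [← add_seq, h]

lemma seq_kle_right (x : K) {y z : K} (h : kle y z) : kle (seq x y) (seq x z) := by
  refine kle_trans (kle_trans (kle_add_left (seq x y) (seq x z)) (seq_subdistrib x y z)) ?_
  unfold kle at h ⊢
  rw [h, WCKA.add_idem]

lemma one_kle_star (x : K) : kle one (star x) := by
  have h := star_unfold x
  have h2 := kle_add_left (one : K) (seq x (star x))
  rwa [h] at h2

lemma seq_star_kle (x : K) : kle (seq x (star x)) (star x) := by
  have h := star_unfold x
  have h2 := kle_add_right (one : K) (seq x (star x))
  rwa [h] at h2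

lemma x_kle_star (x : K) : kle x (star x) := by
  have h1 : kle x (seq x (star x)) := by
    have := seq_kle_right x (one_kle_star x)
    rwa [seq_one] at this
  exact kle_trans h1 (seq_star_kle x)

lemma star_seq_star_kle (x : K) : kle (seq (star x) (star x)) (star x) :=
  star_induction x (star x) (seq_star_kle x)

lemma star_kle_star_seq {x : K} (y : K) : kle (star x) (seq (star x) (star y)) := by
  have := seq_kle_right (star x) (one_kle_star y)
  rwa [seq_one] at this

lemma star_mono {x y : K} (h : kle x y) : kle (star x) (star y) := by
  have h1 : kle (seq x (star y)) (star y) :=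
    kle_trans (seq_kle_left (star y) (kle_trans h (x_kle_star y))) (star_seq_star_kle y)
  have h2 := star_induction x (star y) h1
  have h3 : kle (star x) (seq (star x) (star y)) := star_kle_star_seq y
  exact kle_trans h3 h2

end Aux

/-- In any weak concurrent Kleene algebra, `(s + t)* = (s*·t*)*`. -/
theorem wcka_star_add {K : Type*} [WCKAOps K] [WCKA K] (s t : K) :
    star (add s t) = star (seq (star s) (star t)) := by
  open WCKA in
  apply kle_antisymm
  · -- (s+t)* ≤ (s*·t*)*
    apply star_mono
    apply add_kle
    · exact kle_trans (x_kle_star s) (star_kle_star_seq t)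
    · have h1 : kle t (star t) := x_kle_star t
      have h2 : kle (star t) (seq (star s) (star t)) := by
        have := seq_kle_left (star t) (one_kle_star s)
        rwa [one_seq] at this
      exact kle_trans h1 h2
  · -- (s*·t*)* ≤ (s+t)*
    set a := star (add s t) with ha
    have hs : kle (star s) a := star_mono (kle_add_left s t)
    have ht : kle (star t) a := star_mono (kle_add_right s t)
    have haa : kle (seq a a) a := star_seq_star_kle _
    have hst : kle (seq (star s) (star t)) a :=
      kle_trans (kle_trans (seq_kle_left (star t) hs) (seq_kle_right a ht)) haa
    have h1 : kle (seq (seq (star s) (star t)) a) a :=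
      kle_trans (seq_kle_left a hst) haa
    have h2 := star_induction (seq (star s) (star t)) a h1
    have h3 : kle (star (seq (star s) (star t)))
        (seq (star (seq (star s) (star t))) a) := by
      have := seq_kle_right (star (seq (star s) (star t))) (one_kle_star (add s t))
      rwa [seq_one] at this
    exact kle_trans h3 h2
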